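/- Let V be a multiplicative unitary on K ⊗ K and V̂ another multiplicative unitary on K ⊗ K with V̂₁₂ V₂₃ = V₂₃ V̂₁₂. Let W be a unitary on H ⊗ K that is simultaneously a corepresentation-type object satisfying Ŵ₁₂ V₂₃ = V₂₃ Ŵ₁₂ and such that Ŵ is a representation of V̂ (Ŵ₁₂Ŵ₁₃V̂₂₃ = V̂₂₃Ŵ₁₂). If Ŵ' is another such unitary on H' ⊗ K with Ŵ₁₂ W'₂₃ = W'₂₃ Ŵ₁₂, then Ŵ₁₃ Ŵ'₂₃ satisfies the representation property for V̂ on H ⊗ H', i.e. the tensor product of representations of V̂ is again a representation of V̂. -/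
import Mathlib


open TensorProduct

noncomputable section

section Legs

variable (A B C : Type*) [AddCommGroup A] [Module ℂ A] [AddCommGroup B] [Module ℂ B]
  [AddCommGroup C] [Module ℂ C]

/-- A unitary `X` on the first two tensor factors, amplified to a triple tensor product. -/
def leg12 (X : A ⊗[ℂ] B ≃ₗ[ℂ] A ⊗[ℂ] B) :
    (A ⊗[ℂ] B) ⊗[ℂ] C ≃ₗ[ℂ] (A ⊗[ℂ] B) ⊗[ℂ] C :=
  TensorProduct.congr X (LinearEquiv.refl ℂ C)

/-- A unitary `X` on the last two tensor factors, amplified to a triple tensor product. -/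
def leg23 (X : B ⊗[ℂ] C ≃ₗ[ℂ] B ⊗[ℂ] C) :
    (A ⊗[ℂ] B) ⊗[ℂ] C ≃ₗ[ℂ] (A ⊗[ℂ] B) ⊗[ℂ] C :=
  (TensorProduct.assoc ℂ A B C).trans
    ((TensorProduct.congr (LinearEquiv.refl ℂ A) X).trans
      (TensorProduct.assoc ℂ A B C).symm)

/-- The flip of the second and third tensor factors. -/
def swap23 : (A ⊗[ℂ] B) ⊗[ℂ] C ≃ₗ[ℂ] (A ⊗[ℂ] C) ⊗[ℂ] B :=
  (TensorProduct.assoc ℂ A B C).trans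
    ((TensorProduct.congr (LinearEquiv.refl ℂ A) (TensorProduct.comm ℂ B C)).trans
      (TensorProduct.assoc ℂ A C B).symm)

/-- A unitary `X` on the first and third tensor factors, amplified to a triple tensor product. -/
def leg13 (X : A ⊗[ℂ] C ≃ₗ[ℂ] A ⊗[ℂ] C) :
    (A ⊗[ℂ] B) ⊗[ℂ] C ≃ₗ[ℂ] (A ⊗[ℂ] B) ⊗[ℂ] C :=
  (swap23 A B C).trans ((leg12 A C B X).trans (swap23 A C B))

end Legs
section Helpers
variable {R : Type*} [CommRing R] {M N P Q : Type*} [AddCommGroup M] [Module R M]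
  [AddCommGroup N] [Module R N] [AddCommGroup P] [Module R P] [AddCommGroup Q] [Module R Q]

lemma ltrans_assoc (e₁ : M ≃ₗ[R] N) (e₂ : N ≃ₗ[R] P) (e₃ : P ≃ₗ[R] Q) :
    (e₁.trans e₂).trans e₃ = e₁.trans (e₂.trans e₃) := rfl

lemma trans_cancel_left (e : M ≃ₗ[R] N) (f : N ≃ₗ[R] P) :
    e.symm.trans (e.trans f) = f := by
  ext x; simp

lemma trans_cancel_left' (e : M ≃ₗ[R] N) (f : M ≃ₗ[R] P) :
    e.trans (e.symm.trans f) = f := by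
  ext x; simp

lemma conj_trans {M N : Type*} [AddCommGroup M] [Module ℂ M] [AddCommGroup N] [Module ℂ N]
    (e : N ≃ₗ[ℂ] M) (X Y : M ≃ₗ[ℂ] M) :
    e.trans ((X.trans Y).trans e.symm)
      = (e.trans (X.trans e.symm)).trans (e.trans (Y.trans e.symm)) := by
  ext x; simp

end Helpers

section Helpers2
variable (A B C D : Type*) [AddCommGroup A] [Module ℂ A] [AddCommGroup B] [Module ℂ B]
  [AddCommGroup C] [Module ℂ C] [AddCommGroup D] [Module ℂ D]

lemma swap23_swap23 : (swap23 A B C).trans (swap23 A C B) = LinearEquiv.refl ℂ _ := by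
  apply LinearEquiv.toLinearMap_injective
  ext a b c
  simp [swap23]

lemma leg12_trans (X Y : A ⊗[ℂ] B ≃ₗ[ℂ] A ⊗[ℂ] B) :
    leg12 A B C (X.trans Y) = (leg12 A B C X).trans (leg12 A B C Y) := by
  rw [leg12, leg12, leg12, ← TensorProduct.congr_trans, LinearEquiv.refl_trans]

lemma leg23_trans (X Y : B ⊗[ℂ] C ≃ₗ[ℂ] B ⊗[ℂ] C) :
    leg23 A B C (X.trans Y) = (leg23 A B C X).trans (leg23 A B C Y) := by
  simp only [leg23, ltrans_assoc, trans_cancel_left, trans_cancel_left']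
  congr 1
  rw [← ltrans_assoc, ← TensorProduct.congr_trans, LinearEquiv.refl_trans]

lemma leg13_trans (X Y : A ⊗[ℂ] C ≃ₗ[ℂ] A ⊗[ℂ] C) :
    leg13 A B C (X.trans Y) = (leg13 A B C X).trans (leg13 A B C Y) := by
  simp only [leg13, leg12_trans, ltrans_assoc]
  congr 1
  rw [← ltrans_assoc (swap23 A C B), swap23_swap23, LinearEquiv.refl_trans]

end Helpers2
section Helpers3
variable (A B C D : Type*) [AddCommGroup A] [Module ℂ A] [AddCommGroup B] [Module ℂ B]
  [AddCommGroup C] [Module ℂ C] [AddCommGroup D] [Module ℂ D]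

/-- Reassociation `((A⊗B)⊗C)⊗D ≃ A⊗((B⊗C)⊗D)`. -/
def phiA : ((A ⊗[ℂ] B) ⊗[ℂ] C) ⊗[ℂ] D ≃ₗ[ℂ] A ⊗[ℂ] ((B ⊗[ℂ] C) ⊗[ℂ] D) :=
  (TensorProduct.congr (TensorProduct.assoc ℂ A B C) (LinearEquiv.refl ℂ D)).trans
    (TensorProduct.assoc ℂ A (B ⊗[ℂ] C) D)

def ampL (X : (B ⊗[ℂ] C) ⊗[ℂ] D ≃ₗ[ℂ] (B ⊗[ℂ] C) ⊗[ℂ] D) :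
    ((A ⊗[ℂ] B) ⊗[ℂ] C) ⊗[ℂ] D ≃ₗ[ℂ] ((A ⊗[ℂ] B) ⊗[ℂ] C) ⊗[ℂ] D :=
  (phiA A B C D).trans ((TensorProduct.congr (LinearEquiv.refl ℂ A) X).trans (phiA A B C D).symm)

lemma ampL_trans (X Y : (B ⊗[ℂ] C) ⊗[ℂ] D ≃ₗ[ℂ] (B ⊗[ℂ] C) ⊗[ℂ] D) :
    ampL A B C D (X.trans Y) = (ampL A B C D X).trans (ampL A B C D Y) := by
  have h : TensorProduct.congr (LinearEquiv.refl ℂ A) (X.trans Y)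
      = (TensorProduct.congr (LinearEquiv.refl ℂ A) X).trans
          (TensorProduct.congr (LinearEquiv.refl ℂ A) Y) := by
    rw [← TensorProduct.congr_trans, LinearEquiv.refl_trans]
  rw [ampL, ampL, ampL, h]
  apply LinearEquiv.ext; intro x
  simp

lemma ampL_leg12 (f : B ⊗[ℂ] C ≃ₗ[ℂ] B ⊗[ℂ] C) :
    leg12 (A ⊗[ℂ] B) C D (leg23 A B C f) = ampL A B C D (leg12 B C D f) := by
  apply LinearEquiv.toLinearMap_injective
  ext a b c d
  simp only [leg12, leg23, phiA, ampL, swap23, leg13, LinearEquiv.coe_coe,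
    TensorProduct.AlgebraTensorModule.curry_apply, TensorProduct.curry_apply,
    LinearMap.coe_restrictScalars,
    LinearEquiv.trans_apply, TensorProduct.congr_tmul, TensorProduct.assoc_tmul,
    TensorProduct.assoc_symm_tmul, TensorProduct.comm_tmul, LinearEquiv.refl_apply]
  obtain ⟨z, hz⟩ : ∃ z, f (b ⊗ₜ[ℂ] c) = z := ⟨_, rfl⟩
  rw [hz]; clear hz
  induction z using TensorProduct.induction_on with
  | zero => simp
  | tmul b' c' => simp [TensorProduct.assoc_tmul, TensorProduct.assoc_symm_tmul,
      TensorProduct.congr_tmul]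
  | add u v hu hv => simp only [map_add, TensorProduct.tmul_add, TensorProduct.add_tmul, hu, hv]

/-- Move the second factor to the end: `((A⊗B)⊗C)⊗D ≃ ((A⊗C)⊗D)⊗B`. -/
def phiB : ((A ⊗[ℂ] B) ⊗[ℂ] C) ⊗[ℂ] D ≃ₗ[ℂ] ((A ⊗[ℂ] C) ⊗[ℂ] D) ⊗[ℂ] B :=
  (TensorProduct.congr (swap23 A B C) (LinearEquiv.refl ℂ D)).trans (swap23 (A ⊗[ℂ] C) B D)

def ampR (X : (A ⊗[ℂ] C) ⊗[ℂ] D ≃ₗ[ℂ] (A ⊗[ℂ] C) ⊗[ℂ] D) :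
    ((A ⊗[ℂ] B) ⊗[ℂ] C) ⊗[ℂ] D ≃ₗ[ℂ] ((A ⊗[ℂ] B) ⊗[ℂ] C) ⊗[ℂ] D :=
  (phiB A B C D).trans ((TensorProduct.congr X (LinearEquiv.refl ℂ B)).trans (phiB A B C D).symm)

/-- `((A⊗B)⊗C)⊗D ≃ (A⊗D)⊗(B⊗C)`. -/
def phiC : ((A ⊗[ℂ] B) ⊗[ℂ] C) ⊗[ℂ] D ≃ₗ[ℂ] (A ⊗[ℂ] D) ⊗[ℂ] (B ⊗[ℂ] C) :=
  (TensorProduct.congr (TensorProduct.assoc ℂ A B C) (LinearEquiv.refl ℂ D)).trans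
    (swap23 A (B ⊗[ℂ] C) D)

lemma ampL_leg13 (f : B ⊗[ℂ] D ≃ₗ[ℂ] B ⊗[ℂ] D) :
    leg13 (A ⊗[ℂ] B) C D (leg23 A B D f) = ampL A B C D (leg13 B C D f) := by
  apply LinearEquiv.toLinearMap_injective
  ext a b c d
  simp only [leg12, leg23, leg13, swap23, phiA, phiB, phiC, ampL, ampR, LinearEquiv.coe_coe,
    TensorProduct.AlgebraTensorModule.curry_apply, TensorProduct.curry_apply,
    LinearMap.coe_restrictScalars,
    LinearEquiv.trans_apply, TensorProduct.congr_tmul, TensorProduct.assoc_tmul,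
    TensorProduct.assoc_symm_tmul, TensorProduct.comm_tmul, LinearEquiv.refl_apply]
  obtain ⟨z, hz⟩ : ∃ z, f (b ⊗ₜ[ℂ] d) = z := ⟨_, rfl⟩
  rw [hz]; clear hz
  induction z using TensorProduct.induction_on with
  | zero => simp
  | tmul p q => simp [leg12, leg23, leg13, swap23, phiA, phiB, phiC, ampL, ampR, LinearEquiv.coe_coe,
    TensorProduct.AlgebraTensorModule.curry_apply, TensorProduct.curry_apply,
    LinearMap.coe_restrictScalars,
    LinearEquiv.trans_apply, TensorProduct.congr_tmul, TensorProduct.assoc_tmul,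
    TensorProduct.assoc_symm_tmul, TensorProduct.comm_tmul, LinearEquiv.refl_apply]
  | add u v hu hv => simp only [map_add, TensorProduct.tmul_add, TensorProduct.add_tmul, hu, hv]

lemma ampL_leg23 (f : C ⊗[ℂ] D ≃ₗ[ℂ] C ⊗[ℂ] D) :
    leg23 (A ⊗[ℂ] B) C D f = ampL A B C D (leg23 B C D f) := by
  apply LinearEquiv.toLinearMap_injective
  ext a b c d
  simp only [leg12, leg23, leg13, swap23, phiA, phiB, phiC, ampL, ampR, LinearEquiv.coe_coe,
    TensorProduct.AlgebraTensorModule.curry_apply, TensorProduct.curry_apply,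
    LinearMap.coe_restrictScalars,
    LinearEquiv.trans_apply, TensorProduct.congr_tmul, TensorProduct.assoc_tmul,
    TensorProduct.assoc_symm_tmul, TensorProduct.comm_tmul, LinearEquiv.refl_apply]
  obtain ⟨z, hz⟩ : ∃ z, f (c ⊗ₜ[ℂ] d) = z := ⟨_, rfl⟩
  rw [hz]; clear hz
  induction z using TensorProduct.induction_on with
  | zero => simp
  | tmul p q => simp [leg12, leg23, leg13, swap23, phiA, phiB, phiC, ampL, ampR, LinearEquiv.coe_coe,
    TensorProduct.AlgebraTensorModule.curry_apply, TensorProduct.curry_apply,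
    LinearMap.coe_restrictScalars,
    LinearEquiv.trans_apply, TensorProduct.congr_tmul, TensorProduct.assoc_tmul,
    TensorProduct.assoc_symm_tmul, TensorProduct.comm_tmul, LinearEquiv.refl_apply]
  | add u v hu hv => simp only [map_add, TensorProduct.tmul_add, TensorProduct.add_tmul, hu, hv]

lemma ampR_trans (X Y : (A ⊗[ℂ] C) ⊗[ℂ] D ≃ₗ[ℂ] (A ⊗[ℂ] C) ⊗[ℂ] D) :
    ampR A B C D (X.trans Y) = (ampR A B C D X).trans (ampR A B C D Y) := by
  have h : TensorProduct.congr (X.trans Y) (LinearEquiv.refl ℂ B)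
      = (TensorProduct.congr X (LinearEquiv.refl ℂ B)).trans
          (TensorProduct.congr Y (LinearEquiv.refl ℂ B)) := by
    rw [← TensorProduct.congr_trans, LinearEquiv.refl_trans]
  rw [ampR, ampR, ampR, h]
  apply LinearEquiv.ext; intro x
  simp

lemma ampR_leg12 (f : A ⊗[ℂ] C ≃ₗ[ℂ] A ⊗[ℂ] C) :
    leg12 (A ⊗[ℂ] B) C D (leg13 A B C f) = ampR A B C D (leg12 A C D f) := by
  apply LinearEquiv.toLinearMap_injective
  ext a b c d
  simp only [leg12, leg23, leg13, swap23, phiA, phiB, phiC, ampL, ampR, LinearEquiv.coe_coe,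
    TensorProduct.AlgebraTensorModule.curry_apply, TensorProduct.curry_apply,
    LinearMap.coe_restrictScalars,
    LinearEquiv.trans_apply, TensorProduct.congr_tmul, TensorProduct.assoc_tmul,
    TensorProduct.assoc_symm_tmul, TensorProduct.comm_tmul, LinearEquiv.refl_apply]
  obtain ⟨z, hz⟩ : ∃ z, f (a ⊗ₜ[ℂ] c) = z := ⟨_, rfl⟩
  rw [hz]; clear hz
  induction z using TensorProduct.induction_on with
  | zero => simp
  | tmul p q => simp [leg12, leg23, leg13, swap23, phiA, phiB, phiC, ampL, ampR, LinearEquiv.coe_coe,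
    TensorProduct.AlgebraTensorModule.curry_apply, TensorProduct.curry_apply,
    LinearMap.coe_restrictScalars,
    LinearEquiv.trans_apply, TensorProduct.congr_tmul, TensorProduct.assoc_tmul,
    TensorProduct.assoc_symm_tmul, TensorProduct.comm_tmul, LinearEquiv.refl_apply]
  | add u v hu hv => simp only [map_add, TensorProduct.tmul_add, TensorProduct.add_tmul, hu, hv]

set_option maxHeartbeats 1000000 in
lemma ampR_leg13 (f : A ⊗[ℂ] D ≃ₗ[ℂ] A ⊗[ℂ] D) :
    leg13 (A ⊗[ℂ] B) C D (leg13 A B D f) = ampR A B C D (leg13 A C D f) := by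
  apply LinearEquiv.toLinearMap_injective
  ext a b c d
  simp only [leg12, leg23, leg13, swap23, phiA, phiB, phiC, ampL, ampR, LinearEquiv.coe_coe,
    TensorProduct.AlgebraTensorModule.curry_apply, TensorProduct.curry_apply,
    LinearMap.coe_restrictScalars,
    LinearEquiv.trans_apply, TensorProduct.congr_tmul, TensorProduct.assoc_tmul,
    TensorProduct.assoc_symm_tmul, TensorProduct.comm_tmul, LinearEquiv.refl_apply]
  obtain ⟨z, hz⟩ : ∃ z, f (a ⊗ₜ[ℂ] d) = z := ⟨_, rfl⟩
  rw [hz]; clear hz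
  induction z using TensorProduct.induction_on with
  | zero => simp
  | tmul p q => simp [leg12, leg23, leg13, swap23, phiA, phiB, phiC, ampL, ampR, LinearEquiv.coe_coe,
    TensorProduct.AlgebraTensorModule.curry_apply, TensorProduct.curry_apply,
    LinearMap.coe_restrictScalars,
    LinearEquiv.trans_apply, TensorProduct.congr_tmul, TensorProduct.assoc_tmul,
    TensorProduct.assoc_symm_tmul, TensorProduct.comm_tmul, LinearEquiv.refl_apply]
  | add u v hu hv => simp only [map_add, TensorProduct.tmul_add, TensorProduct.add_tmul, hu, hv]

lemma ampR_leg23 (f : C ⊗[ℂ] D ≃ₗ[ℂ] C ⊗[ℂ] D) :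
    leg23 (A ⊗[ℂ] B) C D f = ampR A B C D (leg23 A C D f) := by
  apply LinearEquiv.toLinearMap_injective
  ext a b c d
  simp only [leg12, leg23, leg13, swap23, phiA, phiB, phiC, ampL, ampR, LinearEquiv.coe_coe,
    TensorProduct.AlgebraTensorModule.curry_apply, TensorProduct.curry_apply,
    LinearMap.coe_restrictScalars,
    LinearEquiv.trans_apply, TensorProduct.congr_tmul, TensorProduct.assoc_tmul,
    TensorProduct.assoc_symm_tmul, TensorProduct.comm_tmul, LinearEquiv.refl_apply]
  obtain ⟨z, hz⟩ : ∃ z, f (c ⊗ₜ[ℂ] d) = z := ⟨_, rfl⟩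
  rw [hz]; clear hz
  induction z using TensorProduct.induction_on with
  | zero => simp
  | tmul p q => simp [leg12, leg23, leg13, swap23, phiA, phiB, phiC, ampL, ampR, LinearEquiv.coe_coe,
    TensorProduct.AlgebraTensorModule.curry_apply, TensorProduct.curry_apply,
    LinearMap.coe_restrictScalars,
    LinearEquiv.trans_apply, TensorProduct.congr_tmul, TensorProduct.assoc_tmul,
    TensorProduct.assoc_symm_tmul, TensorProduct.comm_tmul, LinearEquiv.refl_apply]
  | add u v hu hv => simp only [map_add, TensorProduct.tmul_add, TensorProduct.add_tmul, hu, hv]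

lemma phiC_leg13 (f : A ⊗[ℂ] D ≃ₗ[ℂ] A ⊗[ℂ] D) :
    leg13 (A ⊗[ℂ] B) C D (leg13 A B D f) = (phiC A B C D).trans ((TensorProduct.congr f (LinearEquiv.refl ℂ (B ⊗[ℂ] C))).trans (phiC A B C D).symm) := by
  apply LinearEquiv.toLinearMap_injective
  ext a b c d
  simp only [leg12, leg23, leg13, swap23, phiA, phiB, phiC, ampL, ampR, LinearEquiv.coe_coe,
    TensorProduct.AlgebraTensorModule.curry_apply, TensorProduct.curry_apply,
    LinearMap.coe_restrictScalars,
    LinearEquiv.trans_apply, TensorProduct.congr_tmul, TensorProduct.assoc_tmul,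
    TensorProduct.assoc_symm_tmul, TensorProduct.comm_tmul, LinearEquiv.refl_apply]
  obtain ⟨z, hz⟩ : ∃ z, f (a ⊗ₜ[ℂ] d) = z := ⟨_, rfl⟩
  rw [hz]; clear hz
  induction z using TensorProduct.induction_on with
  | zero => simp
  | tmul p q => simp [leg12, leg23, leg13, swap23, phiA, phiB, phiC, ampL, ampR, LinearEquiv.coe_coe,
    TensorProduct.AlgebraTensorModule.curry_apply, TensorProduct.curry_apply,
    LinearMap.coe_restrictScalars,
    LinearEquiv.trans_apply, TensorProduct.congr_tmul, TensorProduct.assoc_tmul,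
    TensorProduct.assoc_symm_tmul, TensorProduct.comm_tmul, LinearEquiv.refl_apply]
  | add u v hu hv => simp only [map_add, TensorProduct.tmul_add, TensorProduct.add_tmul, hu, hv]

lemma phiC_leg12 (f : B ⊗[ℂ] C ≃ₗ[ℂ] B ⊗[ℂ] C) :
    leg12 (A ⊗[ℂ] B) C D (leg23 A B C f) = (phiC A B C D).trans ((TensorProduct.congr (LinearEquiv.refl ℂ (A ⊗[ℂ] D)) f).trans (phiC A B C D).symm) := by
  apply LinearEquiv.toLinearMap_injective
  ext a b c d
  simp only [leg12, leg23, leg13, swap23, phiA, phiB, phiC, ampL, ampR, LinearEquiv.coe_coe,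
    TensorProduct.AlgebraTensorModule.curry_apply, TensorProduct.curry_apply,
    LinearMap.coe_restrictScalars,
    LinearEquiv.trans_apply, TensorProduct.congr_tmul, TensorProduct.assoc_tmul,
    TensorProduct.assoc_symm_tmul, TensorProduct.comm_tmul, LinearEquiv.refl_apply]
  obtain ⟨z, hz⟩ : ∃ z, f (b ⊗ₜ[ℂ] c) = z := ⟨_, rfl⟩
  rw [hz]; clear hz
  induction z using TensorProduct.induction_on with
  | zero => simp
  | tmul p q => simp [leg12, leg23, leg13, swap23, phiA, phiB, phiC, ampL, ampR, LinearEquiv.coe_coe,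
    TensorProduct.AlgebraTensorModule.curry_apply, TensorProduct.curry_apply,
    LinearMap.coe_restrictScalars,
    LinearEquiv.trans_apply, TensorProduct.congr_tmul, TensorProduct.assoc_tmul,
    TensorProduct.assoc_symm_tmul, TensorProduct.comm_tmul, LinearEquiv.refl_apply]
  | add u v hu hv => simp only [map_add, TensorProduct.tmul_add, TensorProduct.add_tmul, hu, hv]

lemma leg13_leg12_comm (f : A ⊗[ℂ] D ≃ₗ[ℂ] A ⊗[ℂ] D) (g : B ⊗[ℂ] C ≃ₗ[ℂ] B ⊗[ℂ] C) :
    (leg13 (A ⊗[ℂ] B) C D (leg13 A B D f)).trans (leg12 (A ⊗[ℂ] B) C D (leg23 A B C g))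
      = (leg12 (A ⊗[ℂ] B) C D (leg23 A B C g)).trans (leg13 (A ⊗[ℂ] B) C D (leg13 A B D f)) := by
  rw [phiC_leg13, phiC_leg12]
  have h : (TensorProduct.congr f (LinearEquiv.refl ℂ (B ⊗[ℂ] C))).trans
        (TensorProduct.congr (LinearEquiv.refl ℂ (A ⊗[ℂ] D)) g)
      = (TensorProduct.congr (LinearEquiv.refl ℂ (A ⊗[ℂ] D)) g).trans
        (TensorProduct.congr f (LinearEquiv.refl ℂ (B ⊗[ℂ] C))) := by
    rw [← TensorProduct.congr_trans, ← TensorProduct.congr_trans, LinearEquiv.refl_trans,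
      LinearEquiv.trans_refl, LinearEquiv.refl_trans, LinearEquiv.trans_refl]
  have h' := DFunLike.congr_fun h
  simp only [LinearEquiv.trans_apply] at h'
  apply LinearEquiv.ext; intro x
  simp only [LinearEquiv.trans_apply, LinearEquiv.apply_symm_apply]
  rw [h']


end Helpers3

/-- `V` is a multiplicative unitary: the pentagon equation `V₁₂V₁₃V₂₃ = V₂₃V₁₂`
(operator products read right to left, i.e. `V₂₃` acts first on the left-hand side). -/
def Pentagon (K : Type*) [AddCommGroup K] [Module ℂ K]
    (V : K ⊗[ℂ] K ≃ₗ[ℂ] K ⊗[ℂ] K) : Prop :=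
  (leg23 K K K V).trans ((leg13 K K K V).trans (leg12 K K K V)) =
    (leg12 K K K V).trans (leg23 K K K V)

/-- `W` (a unitary on `H ⊗ K`) is a representation of `V`:  `W₁₂W₁₃V₂₃ = V₂₃W₁₂`. -/
def IsRepn (H K : Type*) [AddCommGroup H] [Module ℂ H] [AddCommGroup K] [Module ℂ K]
    (V : K ⊗[ℂ] K ≃ₗ[ℂ] K ⊗[ℂ] K) (W : H ⊗[ℂ] K ≃ₗ[ℂ] H ⊗[ℂ] K) : Prop :=
  (leg23 H K K V).trans ((leg13 H K K W).trans (leg12 H K K W)) =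
    (leg12 H K K W).trans (leg23 H K K V)

/-- **part of Theorem A.2.** Let `V`, `V̂` be multiplicative unitaries on
`K ⊗ K` with `V̂₁₂V₂₃ = V₂₃V̂₁₂`.  Let `Ŵ` (on `H ⊗ K`) and `Ŵ'` (on `H' ⊗ K`) be
representations of `V̂` each commuting with `V` in the sense `Ŵ₁₂V₂₃ = V₂₃Ŵ₁₂`, and
suppose `Ŵ₁₂ W'₂₃ = W'₂₃ Ŵ₁₂` on `H ⊗ K ⊗ H'` (where `W'` is `Ŵ'` viewed on `K ⊗ H'`
via the flip).  Then `Ŵ₁₃ Ŵ'₂₃` is again a representation of `V̂`, on `H ⊗ H'`. -/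
theorem thm_A2_tensor_of_representations
    (K H H' : Type*) [NormedAddCommGroup K] [InnerProductSpace ℂ K] [CompleteSpace K]
    [NormedAddCommGroup H] [InnerProductSpace ℂ H] [CompleteSpace H]
    [NormedAddCommGroup H'] [InnerProductSpace ℂ H'] [CompleteSpace H']
    (V Vh : K ⊗[ℂ] K ≃ₗ[ℂ] K ⊗[ℂ] K)
    (hV : Pentagon K V) (hVh : Pentagon K Vh)
    (hcomm : (leg23 K K K V).trans (leg12 K K K Vh)
           = (leg12 K K K Vh).trans (leg23 K K K V))
    (Wh : H ⊗[ℂ] K ≃ₗ[ℂ] H ⊗[ℂ] K) (Wh' : H' ⊗[ℂ] K ≃ₗ[ℂ] H' ⊗[ℂ] K)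
    (hWh : IsRepn H K Vh Wh) (hWh' : IsRepn H' K Vh Wh')
    (hWV : (leg23 H K K V).trans (leg12 H K K Wh)
         = (leg12 H K K Wh).trans (leg23 H K K V))
    (hW'V : (leg23 H' K K V).trans (leg12 H' K K Wh')
          = (leg12 H' K K Wh').trans (leg23 H' K K V))
    (hWW' : (leg23 H K H' ((TensorProduct.comm ℂ K H').trans
                (Wh'.trans (TensorProduct.comm ℂ H' K)))).trans (leg12 H K H' Wh)
          = (leg12 H K H' Wh).trans
              (leg23 H K H' ((TensorProduct.comm ℂ K H').trans
                (Wh'.trans (TensorProduct.comm ℂ H' K))))) :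
    IsRepn (H ⊗[ℂ] H') K Vh ((leg23 H H' K Wh').trans (leg13 H H' K Wh)) := by
  unfold IsRepn at hWh hWh' ⊢
  rw [leg12_trans, leg13_trans]
  -- the five 4-leg operators
  set V34 := leg23 (H ⊗[ℂ] H') K K Vh with hV34
  set W13 := leg12 (H ⊗[ℂ] H') K K (leg13 H H' K Wh) with hW13
  set W23' := leg12 (H ⊗[ℂ] H') K K (leg23 H H' K Wh') with hW23'
  set W14 := leg13 (H ⊗[ℂ] H') K K (leg13 H H' K Wh) with hW14
  set W24' := leg13 (H ⊗[ℂ] H') K K (leg23 H H' K Wh') with hW24'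
  have ha := congrArg (ampL H H' K K) hWh'
  simp only [ampL_trans] at ha
  rw [← ampL_leg12, ← ampL_leg13, ← ampL_leg23, ← hW23', ← hW24', ← hV34] at ha
  have hb := congrArg (ampR H H' K K) hWh
  simp only [ampR_trans] at hb
  rw [← ampR_leg12, ← ampR_leg13, ← ampR_leg23, ← hW13, ← hW14, ← hV34] at hb
  have hc := leg13_leg12_comm H H' K K Wh Wh'
  rw [← hW14, ← hW23'] at hc
  -- now pure composition algebra, done pointwise
  have ha' := DFunLike.congr_fun ha
  have hb' := DFunLike.congr_fun hb
  have hc' := DFunLike.congr_fun hc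
  simp only [LinearEquiv.trans_apply] at ha' hb' hc'
  apply LinearEquiv.ext; intro x
  simp only [LinearEquiv.trans_apply]
  rw [hc', ha', hb']
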